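/- arXiv:0710.0887 — 2 statements merged into one kernel-verified Lean document; each statement's English description precedes it below -/
import Mathlib

section
/- Let V be a C_2-cofinite vertex operator algebra. Then Zhu's algebra A(V) = V/O(V) is finite-dimensional. -/
/-!
Choose a finite set `B` of homogeneous vectors spanning `V` modulo `C_2(V)` and put
`T = O(V) + span B`. Modulo `O(V)`, a homogeneous `u_{-2} v` is a combination of the
`u_{i-2} v` with `i ≥ 1`, all of strictly lower weight. As `C_2(V)` is spanned by such
homogeneous products, every weight space satisfies `V_n ⊆ T + V_{<n}`, so induction on the
weight gives `T = V`, and `A(V)` is spanned by the image of `B`.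
-/

open scoped BigOperators

namespace VOAPaper

/-- Integer binomial coefficient `C(m, i)` for `m : ℤ`, `i : ℕ`. -/
def zchoose (m : ℤ) (i : ℕ) : ℤ :=
  if 0 ≤ m then ((m.toNat).choose i : ℤ)
  else (-1) ^ i * ((((i : ℤ) - m - 1).toNat).choose i : ℤ)

variable (V : Type) [AddCommGroup V] [Module ℂ V]

/-- A vertex algebra structure on `V`: modes `u_n`, vacuum, truncation,
vacuum/creation axioms, and the Borcherds (Jacobi) identity. -/
structure VertexAlg where
  mode : V →ₗ[ℂ] ℤ → Module.End ℂ V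
  vac : V
  trunc : ∀ u w : V, ∃ N : ℤ, ∀ n : ℤ, N ≤ n → mode u n w = 0
  vac_mode : ∀ (n : ℤ) (w : V), mode vac n w = if n = -1 then w else 0
  creation_neg_one : ∀ u : V, mode u (-1) vac = u
  creation_nonneg : ∀ (u : V) (n : ℤ), 0 ≤ n → mode u n vac = 0
  borcherds : ∀ (u v w : V) (p q m : ℤ),
    (∑ᶠ i : ℕ, zchoose m i • mode (mode u (p + i) v) (m + q - i) w) =
    (∑ᶠ i : ℕ, ((-1 : ℤ) ^ i * zchoose p i) •
      (mode u (p + m - i) (mode v (q + i) w)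
        - (p.negOnePow : ℤ) • mode v (p + q - i) (mode u (m + i) w)))

/-- A vertex operator algebra of CFT-type: a vertex algebra with conformal
vector `ω`, central charge `c`, an `L(0)`-grading `V = ⊕_{n ≥ 0} V_n` with
`V_0 = ℂ 1`, Virasoro relations, and the `L(-1)`-derivation property. -/
structure VOA extends VertexAlg V where
  ω : V
  c : ℂ
  grading : ℤ → Submodule ℂ V
  internal : DirectSum.IsInternal grading
  neg_bot : ∀ n : ℤ, n < 0 → grading n = ⊥
  L0_eigen : ∀ (n : ℤ) (v : V), v ∈ grading n → mode ω 1 v = (n : ℂ) • v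
  vac_grade : vac ∈ grading 0
  cft : grading 0 = Submodule.span ℂ {vac}
  ω_grade : ω ∈ grading 2
  virasoro : ∀ m n : ℤ,
    mode ω (m + 1) * mode ω (n + 1) - mode ω (n + 1) * mode ω (m + 1)
      = (m - n) • mode ω (m + n + 1)
        + (if m + n = 0 then ((m ^ 3 - m : ℂ) / 12) * c else 0) • (1 : Module.End ℂ V)
  Lneg1_deriv : ∀ (u : V) (n : ℤ), mode (mode ω 0 u) n = (-n) • mode u (n - 1)

/-- A weak module for (the underlying vertex algebra of) `V`. -/
structure WeakMod (A : VertexAlg V) (M : Type) [AddCommGroup M] [Module ℂ M] where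
  mmode : V →ₗ[ℂ] ℤ → Module.End ℂ M
  trunc : ∀ (v : V) (w : M), ∃ N : ℤ, ∀ n : ℤ, N ≤ n → mmode v n w = 0
  vac_mode : ∀ (n : ℤ) (w : M), mmode A.vac n w = if n = -1 then w else 0
  borcherds : ∀ (u v : V) (w : M) (p q m : ℤ),
    (∑ᶠ i : ℕ, zchoose m i • mmode (A.mode u (p + i) v) (m + q - i) w) =
    (∑ᶠ i : ℕ, ((-1 : ℤ) ^ i * zchoose p i) •
      (mmode u (p + m - i) (mmode v (q + i) w)
        - (p.negOnePow : ℤ) • mmode v (p + q - i) (mmode u (m + i) w)))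

/-- An ℕ-gradable weak module: a weak module with a compatible
lower-truncated grading `M = ⊕_{n ≥ 0} M(n)`. -/
structure NGradedMod (W : VOA V) (M : Type) [AddCommGroup M] [Module ℂ M]
    extends WeakMod V W.toVertexAlg M where
  mgrading : ℤ → Submodule ℂ M
  internal : DirectSum.IsInternal mgrading
  neg_bot : ∀ n : ℤ, n < 0 → mgrading n = ⊥
  compat : ∀ (r : ℤ) (v : V), v ∈ W.grading r → ∀ (m n : ℤ), ∀ w ∈ mgrading n,
    mmode v m w ∈ mgrading (n + r - m - 1)

/-- Iterated application of modes: `applyModes [(u¹,n₁),…,(uʳ,nᵣ)] w = u¹_{n₁} ⋯ uʳ_{nᵣ} w`. -/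
def applyModes (A : VertexAlg V) : List (V × ℤ) → V → V
  | [], w => w
  | p :: L, w => A.mode p.1 p.2 (applyModes A L w)

/-- Iterated application of module modes. -/
def applyModesM {M : Type} [AddCommGroup M] [Module ℂ M] {A : VertexAlg V}
    (Mod : WeakMod V A M) : List (V × ℤ) → M → M
  | [], w => w
  | p :: L, w => Mod.mmode p.1 p.2 (applyModesM Mod L w)

/-- The subspace `C_n(V) = span{ u_{-n} v }`. -/
def Cspace (A : VertexAlg V) (n : ℕ) : Submodule ℂ V :=
  Submodule.span ℂ { x | ∃ u v : V, x = A.mode u (-(n : ℤ)) v }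

/-- The subspace `C_1(V) = span{ u_{-1} v, L(-1)u : u, v ∈ V_+ }`. -/
def C1space (W : VOA V) : Submodule ℂ V :=
  Submodule.span ℂ
    ({ x | ∃ u v : V, (∃ r : ℤ, 0 < r ∧ u ∈ W.grading r) ∧
        (∃ r : ℤ, 0 < r ∧ v ∈ W.grading r) ∧ x = W.mode u (-1) v }
      ∪ { x | ∃ u : V, (∃ r : ℤ, 0 < r ∧ u ∈ W.grading r) ∧ x = W.mode W.ω 0 u })

/-- A submodule invariant under all modes. -/
def Invariant {M : Type} [AddCommGroup M] [Module ℂ M] {A : VertexAlg V}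
    (Mod : WeakMod V A M) (N : Submodule ℂ M) : Prop :=
  ∀ (v : V) (n : ℤ), ∀ w ∈ N, Mod.mmode v n w ∈ N

/-- Irreducibility of a weak module. -/
def IsIrreducibleMod {M : Type} [AddCommGroup M] [Module ℂ M] {A : VertexAlg V}
    (Mod : WeakMod V A M) : Prop :=
  (⊤ : Submodule ℂ M) ≠ ⊥ ∧
    ∀ N : Submodule ℂ M, Invariant V Mod N → N = ⊥ ∨ N = ⊤

/-- `O(V) = span{ Res_x (1+x)^{wt u} x^{-2} Y(u,x)v } = span{ Σ_i C(wt u, i) u_{i-2} v }`. -/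
def Ospace (W : VOA V) : Submodule ℂ V :=
  Submodule.span ℂ { x | ∃ (r : ℤ) (u v : V), u ∈ W.grading r ∧
    x = ∑ᶠ i : ℕ, zchoose r i • W.mode u ((i : ℤ) - 2) v }

section Graded

open DirectSum

variable {ι R M : Type*} [DecidableEq ι] [Ring R] [AddCommGroup M] [Module R M]
variable (p : ι → Submodule R M) [Decomposition p]

theorem mem_span_of_mem_span_iUnion {S : ι → Set M} (hS : ∀ i, S i ⊆ p i) {n : ι} {x : M}
    (hx : x ∈ Submodule.span R (⋃ i, S i)) (hxn : x ∈ p n) :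
    x ∈ Submodule.span R (S n) := by
  rw [← decompose_of_mem_same p hxn]
  clear hxn
  induction hx using Submodule.span_induction with
  | mem s hs =>
    obtain ⟨i, hsi⟩ := Set.mem_iUnion.mp hs
    by_cases hin : i = n
    · subst hin
      rw [decompose_of_mem_same p (hS i hsi)]
      exact Submodule.subset_span hsi
    · rw [decompose_of_mem_ne p (hS i hsi) hin]
      exact Submodule.zero_mem _
  | zero => simp
  | add x y _ _ hx hy =>
    rw [decompose_add, DirectSum.add_apply, Submodule.coe_add]
    exact Submodule.add_mem _ hx hy
  | smul r x _ hx =>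
    rw [decompose_smul, DirectSum.smul_apply, Submodule.coe_smul]
    exact Submodule.smul_mem _ r hx

theorem exists_finite_homogeneous_span_ge {B₀ : Set M} (hB₀ : B₀.Finite) :
    ∃ B : Set M, B.Finite ∧ (∀ b ∈ B, ∃ i, b ∈ p i) ∧
      Submodule.span R B₀ ≤ Submodule.span R B := by
  classical
  refine ⟨⋃ b ∈ B₀, (fun i => (decompose p b i : M)) '' (decompose p b).support,
    hB₀.biUnion fun b _ => (Finset.finite_toSet _).image _, ?_, ?_⟩
  · simp only [Set.mem_iUnion, Set.mem_image]
    rintro _ ⟨b, -, i, -, rfl⟩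
    exact ⟨i, (decompose p b i).2⟩
  · refine Submodule.span_le.mpr fun b hb => ?_
    rw [SetLike.mem_coe, ← sum_support_decompose p b]
    refine Submodule.sum_mem _ fun i hi => Submodule.subset_span ?_
    simp only [Set.mem_iUnion, Set.mem_image]
    exact ⟨b, hb, i, hi, rfl⟩

end Graded

section Eigen

open DirectSum

variable {ι K M : Type*} [DecidableEq ι] [Field K] [AddCommGroup M] [Module K M]

theorem mem_of_apply_eq_smul (q : ι → Submodule K M) [Decomposition q] (f : M →ₗ[K] M)
    {c : ι → K} (hc : Function.Injective c) (hf : ∀ i, ∀ x ∈ q i, f x = c i • x)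
    {n : ι} {x : M} (hx : f x = c n • x) : x ∈ q n := by
  have hcomp : ∀ j (y : M), decompose q (f y) j = c j • decompose q y j := by
    intro j y
    induction y using Decomposition.inductionOn q with
    | zero => simp
    | @homogeneous i y =>
      rw [hf _ _ y.2, decompose_smul, decompose_coe, DirectSum.smul_apply]
      by_cases hij : j = i
      · subst hij; rfl
      · rw [of_eq_of_ne _ _ _ hij, smul_zero, smul_zero]
    | add y z hy hz =>
      rw [map_add, decompose_add, DirectSum.add_apply, hy, hz, decompose_add, DirectSum.add_apply,
        smul_add]
  have hzero : ∀ j, j ≠ n → decompose q x j = 0 := by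
    intro j hj
    have h := hcomp j x
    rw [hx, decompose_smul, DirectSum.smul_apply] at h
    exact (smul_eq_zero.mp (by rw [sub_smul, h, sub_self])).resolve_left
      (sub_ne_zero.mpr (hc.ne (Ne.symm hj)))
  have hsingle : decompose q x = of (fun i => q i) n (decompose q x n) := by
    ext j
    by_cases hj : j = n
    · subst hj; rw [of_eq_same]
    · rw [hzero j hj, of_eq_of_ne _ _ _ hj]
  rw [← (decompose q).symm_apply_apply x, hsingle, decompose_symm_of]
  exact (decompose q x n).2

end Eigen

section Filtration

variable {R M : Type*} [Ring R] [AddCommGroup M] [Module R M]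

theorem eq_top_of_le_sup_iSup_lt (p : ℤ → Submodule R M) (hp : iSup p = ⊤)
    (hneg : ∀ n < 0, p n = ⊥) {T : Submodule R M} (hT : ∀ n, p n ≤ T ⊔ ⨆ m < n, p m) :
    T = ⊤ := by
  have hle : ∀ N : ℕ, ∀ n : ℤ, n < N → p n ≤ T := by
    intro N
    induction N with
    | zero => intro n hn; simp [hneg n (by exact_mod_cast hn)]
    | succ N ih =>
      intro n hn
      have hlower : ⨆ m < n, p m ≤ T := iSup₂_le fun m hm => ih m (by push_cast at hn; omega)
      exact (hT n).trans (sup_le le_rfl hlower)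
  rw [eq_top_iff, ← hp]
  exact iSup_le fun n => hle (n.toNat + 1) n (by omega)

theorem exists_finite_sup_span_eq_top (C : Submodule R M) [Module.Finite R (M ⧸ C)] :
    ∃ B : Set M, B.Finite ∧ C ⊔ Submodule.span R B = ⊤ := by
  obtain ⟨S, hS⟩ := Module.Finite.fg_top (R := R) (M := M ⧸ C)
  obtain ⟨B, -, hB, hBS⟩ := Set.exists_subset_image_finite_and (f := C.mkQ) (s := Set.univ)
    (p := fun t => Submodule.span R t = ⊤) |>.mp
      ⟨S, by simp [Set.image_univ_of_surjective C.mkQ_surjective], S.finite_toSet, hS⟩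
  exact ⟨B, hB, (Submodule.map_mkQ_eq_top C _).mp (by rw [Submodule.map_span, hBS])⟩

theorem finite_quotient_of_sup_span_eq_top {N : Submodule R M} {B : Set M} (hB : B.Finite)
    (h : N ⊔ Submodule.span R B = ⊤) : Module.Finite R (M ⧸ N) := by
  refine ⟨?_⟩
  rw [← (Submodule.map_mkQ_eq_top N _).mpr h, Submodule.map_span]
  exact Submodule.fg_span (hB.image _)

theorem finsum_sub_mem {α : Type*} {f : α → M} (hf : f.support.Finite) (a : α)
    {L : Submodule R M} (hL : ∀ i, i ≠ a → f i ∈ L) : ∑ᶠ i, f i - f a ∈ L := by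
  classical
  rw [finsum_eq_finsetSum_of_support_subset f (s := insert a hf.toFinset) (by simp),
    ← Finset.add_sum_erase _ _ (Finset.mem_insert_self a _), add_sub_cancel_left]
  exact Submodule.sum_mem _ fun i hi => hL i (Finset.ne_of_mem_erase hi)

end Filtration

theorem zchoose_zero_right (m : ℤ) : zchoose m 0 = 1 := by
  unfold zchoose; split_ifs <;> simp

section VOA

variable {V}

theorem VertexAlg.mode_one_comm (A : VertexAlg V) (x a v : V) (m : ℤ) :
    A.mode x 1 (A.mode a m v) - A.mode a m (A.mode x 1 v) =
      A.mode (A.mode x 0 a) (m + 1) v + A.mode (A.mode x 1 a) m v := by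
  have hb := A.borcherds x a v 0 m 1
  rw [finsum_eq_finsetSum_of_support_subset _ (s := Finset.range 2) fun i hi => by
      by_contra h2
      simp only [Finset.coe_range, Set.mem_Iio, not_lt] at h2
      simp [zchoose, Nat.choose_eq_zero_of_lt (by omega : 1 < i)] at hi,
    finsum_eq_single _ 0 fun i hi => by simp [zchoose, Nat.choose_eq_zero_of_lt (by omega : 0 < i)]]
    at hb
  simp [zchoose, Finset.sum_range_succ] at hb
  rw [← hb, add_comm m 1]

theorem VOA.L0_mode (W : VOA V) {k l : ℤ} {a v : V} (ha : a ∈ W.grading k)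
    (hv : v ∈ W.grading l) (m : ℤ) :
    W.mode W.ω 1 (W.mode a m v) = ((k + l - m - 1 : ℤ) : ℂ) • W.mode a m v := by
  have h := W.mode_one_comm W.ω a v m
  rw [W.Lneg1_deriv, add_sub_cancel_right, W.L0_eigen k a ha, W.L0_eigen l v hv, map_smul,
    map_smul, sub_eq_iff_eq_add] at h
  rw [h, LinearMap.smul_apply, Pi.smul_apply, LinearMap.smul_apply,
    ← Int.cast_smul_eq_zsmul ℂ]
  push_cast
  module

theorem VOA.mode_mem_grading (W : VOA V) {k l : ℤ} {a v : V} (ha : a ∈ W.grading k)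
    (hv : v ∈ W.grading l) (m : ℤ) : W.mode a m v ∈ W.grading (k + l - m - 1) := by
  let _ := W.internal.chooseDecomposition
  exact mem_of_apply_eq_smul W.grading (W.mode W.ω 1) Int.cast_injective
    (fun i x hx => W.L0_eigen i x hx) (W.L0_mode ha hv m)

def VOA.negTwoProducts (W : VOA V) (n : ℤ) : Set V :=
  {x | ∃ k l : ℤ, k + l + 1 = n ∧
    ∃ u ∈ W.grading k, ∃ v ∈ W.grading l, x = W.mode u (-2) v}

theorem VOA.negTwoProducts_subset_grading (W : VOA V) (n : ℤ) :
    W.negTwoProducts n ⊆ W.grading n := by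
  rintro _ ⟨k, l, rfl, u, hu, v, hv, rfl⟩
  have h := W.mode_mem_grading hu hv (-2)
  rwa [show k + l - -2 - 1 = k + l + 1 by ring] at h

theorem VOA.Cspace_two_le_span_negTwoProducts (W : VOA V) :
    Cspace V W.toVertexAlg 2 ≤ Submodule.span ℂ (⋃ n, W.negTwoProducts n) := by
  let _ := W.internal.chooseDecomposition
  refine Submodule.span_le.mpr ?_
  rintro _ ⟨u, v, rfl⟩
  induction u using DirectSum.Decomposition.inductionOn W.grading with
  | zero => simp
  | @homogeneous k u =>
    induction v using DirectSum.Decomposition.inductionOn W.grading with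
    | zero => simp
    | @homogeneous l v =>
      exact Submodule.subset_span
        (Set.mem_iUnion.mpr ⟨k + l + 1, k, l, rfl, u, u.2, v, v.2, rfl⟩)
    | add v v' hv hv' => simpa using Submodule.add_mem _ hv hv'
  | add u u' hu hu' => simpa using Submodule.add_mem _ hu hu'

/-- Modulo `O(V)`, `u_{-2} v` equals `-∑_{i ≥ 1} C(wt u, i) u_{i-2} v`, of lower weight. -/
theorem VOA.negTwoProducts_subset_ospace_sup (W : VOA V) (n : ℤ) :
    W.negTwoProducts n ⊆ (Ospace V W ⊔ ⨆ m < n, W.grading m : Submodule ℂ V) := by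
  rintro _ ⟨k, l, rfl, u, hu, v, hv, rfl⟩
  obtain ⟨N, hN⟩ := W.trunc u v
  set f : ℕ → V := fun i => zchoose k i • W.mode u ((i : ℤ) - 2) v
  have hfin : f.support.Finite := (Set.finite_Iio (N + 2).toNat).subset fun i hi => by
    by_contra hiN
    simp only [Set.mem_Iio, not_lt] at hiN
    exact hi (by simp only [f, hN ((i : ℤ) - 2) (by omega), smul_zero])
  have hO : ∑ᶠ i, f i ∈ Ospace V W := Submodule.subset_span ⟨k, u, v, hu, rfl⟩
  have hlower : ∑ᶠ i, f i - f 0 ∈ ⨆ m < k + l + 1, W.grading m :=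
    finsum_sub_mem hfin 0 fun i hi => by
      refine Submodule.mem_iSup_of_mem (k + l - ((i : ℤ) - 2) - 1) ?_
      refine Submodule.mem_iSup_of_mem (by omega) ?_
      exact zsmul_mem (W.mode_mem_grading hu hv _) _
  have hf0 : f 0 = W.mode u (-2) v := by simp [f, zchoose_zero_right]
  rw [← hf0, ← sub_sub_cancel (∑ᶠ i, f i) (f 0)]
  exact Submodule.sub_mem _ (Submodule.mem_sup_left hO) (Submodule.mem_sup_right hlower)

theorem VOA.grading_le_ospace_sup (W : VOA V)
    {B : Set V} (hB : ∀ b ∈ B, ∃ i, b ∈ W.grading i)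
    (htop : Cspace V W.toVertexAlg 2 ⊔ Submodule.span ℂ B = ⊤) (n : ℤ) :
    W.grading n ≤ Ospace V W ⊔ Submodule.span ℂ B ⊔ ⨆ m < n, W.grading m := by
  let _ := W.internal.chooseDecomposition
  let S : ℤ → Set V := fun i => W.negTwoProducts i ∪ {b ∈ B | b ∈ W.grading i}
  have hS : ∀ i, S i ⊆ W.grading i := fun i =>
    Set.union_subset (W.negTwoProducts_subset_grading i) fun _ hb => hb.2
  have hspan : ⊤ ≤ Submodule.span ℂ (⋃ i, S i) := by
    rw [← htop]
    refine sup_le (W.Cspace_two_le_span_negTwoProducts.trans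
      (Submodule.span_mono (Set.iUnion_mono fun i => Set.subset_union_left))) ?_
    refine Submodule.span_mono fun b hb => ?_
    obtain ⟨i, hi⟩ := hB b hb
    exact Set.mem_iUnion.mpr ⟨i, Or.inr ⟨hb, hi⟩⟩
  intro x hx
  refine Submodule.span_le.mpr ?_ (mem_span_of_mem_span_iUnion W.grading hS (hspan trivial) hx)
  rintro y (hy | ⟨hy, -⟩)
  · exact (sup_le_sup_right le_sup_left _ : Ospace V W ⊔ _ ≤ _)
      (W.negTwoProducts_subset_ospace_sup n hy)
  · exact Submodule.mem_sup_left (Submodule.mem_sup_right (Submodule.subset_span hy))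

end VOA

/-- If `V` is `C_2`-cofinite then Zhu's algebra `A(V) = V/O(V)` is finite-dimensional. -/
theorem stmt5 (W : VOA V)
    (h : FiniteDimensional ℂ (V ⧸ Cspace V W.toVertexAlg 2)) :
    FiniteDimensional ℂ (V ⧸ Ospace V W) := by
  let _ := W.internal.chooseDecomposition
  obtain ⟨B₀, hB₀, hC⟩ := exists_finite_sup_span_eq_top (Cspace V W.toVertexAlg 2)
  obtain ⟨B, hB, hBhom, hB₀B⟩ := exists_finite_homogeneous_span_ge W.grading hB₀
  have hCB : Cspace V W.toVertexAlg 2 ⊔ Submodule.span ℂ B = ⊤ :=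
    eq_top_iff.mpr (hC ▸ sup_le_sup_left hB₀B _)
  exact finite_quotient_of_sup_span_eq_top hB <|
    eq_top_of_le_sup_iSup_lt W.grading W.internal.submodule_iSup_eq_top W.neg_bot
      (W.grading_le_ospace_sup hBhom hCB)

end VOAPaper
end

section
/- Let V be a vertex operator algebra of CFT-type and let X be a set of homogeneous representatives of a spanning set of V/C_1(V). Then V is spanned by elements u^{(1)}_{n_1} ⋯ u^{(r)}_{n_r} 1 with r ∈ ℕ, u^{(i)} ∈ X, and n_1 ≤ n_2 ≤ ⋯ ≤ n_r < 0 (a difference-zero condition on the indices). -/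
open scoped BigOperators

namespace VOAPaper

variable (V : Type) [AddCommGroup V] [Module ℂ V]

/-!
Every `v ∈ V_N` is the monomial `v_{-1} 1`, so it suffices to put every monomial
`a¹_{n₁} ⋯ aʳ_{nᵣ} 1` in homogeneous states `aⁱ` of weights `wᵢ` into the span of the ordered
`X`-monomials. This goes by well-founded induction on the lexicographic rank
(`∑ wᵢ`, `∑ wᵢ²`, number of `aⁱ ∉ X`, number of inversions of `(n₁, …, nᵣ)`):
* a state `aⁱ ∉ X` is, modulo `C₁(V)`, a combination of elements of `X` of the same weight (fewer
  states outside `X`), of `u₋₁ v` with `wt u + wt v = wᵢ`, `wt u, wt v > 0` (the Borcherds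
  identity expands `(u₋₁ v)ₙ` into products `u_j v_k`, trading `wᵢ²` for `(wt u)² + (wt v)²`),
  and of `L(-1) u`, whose modes are multiples of those of `u` (total weight drops by one);
* an adjacent pair with `nᵢ > nᵢ₊₁` is swapped by the commutator formula, the correction terms
  `(aⁱ_j aⁱ⁺¹)_{nᵢ + nᵢ₊₁ - j}` having smaller total weight;
* a monomial of `X`-states with `n₁ ≤ ⋯ ≤ nᵣ` is either ordered or zero, as `u_n 1 = 0` for `n ≥ 0`.
-/

lemma _root_.iSupIndep.mem_span_sep_of_mem_span {ι R M : Type*} [Ring R] [AddCommGroup M]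
    [Module R M] {𝒜 : ι → Submodule R M} (h𝒜 : iSupIndep 𝒜) {G : Set M}
    (hG : ∀ g ∈ G, ∃ j, g ∈ 𝒜 j) {i : ι} {a : M} (ha : a ∈ 𝒜 i) (haG : a ∈ Submodule.span R G) :
    a ∈ Submodule.span R {g ∈ G | g ∈ 𝒜 i} := by
  set T := Submodule.span R {g ∈ G | g ∈ 𝒜 i}
  have hGT : Submodule.span R G ≤ T ⊔ ⨆ (j) (_ : j ≠ i), 𝒜 j := by
    refine Submodule.span_le.mpr fun g hg => ?_
    by_cases hgi : g ∈ 𝒜 i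
    · exact Submodule.mem_sup_left (Submodule.subset_span ⟨hg, hgi⟩)
    · obtain ⟨j, hj⟩ := hG g hg
      exact Submodule.mem_sup_right
        (Submodule.mem_iSup_of_mem j (Submodule.mem_iSup_of_mem (fun h => hgi (h ▸ hj)) hj))
  obtain ⟨t, ht, z, hz, rfl⟩ := Submodule.mem_sup.mp (hGT haG)
  have hzi : z ∈ 𝒜 i := by
    simpa using sub_mem ha (Submodule.span_le.mpr (fun g hg => hg.2) ht : t ∈ 𝒜 i)
  rwa [Submodule.disjoint_def.mp (h𝒜 i) z hzi hz, add_zero]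

variable {V}

lemma zchoose_zero (i : ℕ) : zchoose 0 i = if i = 0 then 1 else 0 := by
  cases i <;> simp [zchoose]

lemma zchoose_one (i : ℕ) : zchoose 1 i = if i ≤ 1 then 1 else 0 := by
  rcases i with _ | _ | i <;> simp [zchoose, Nat.choose_eq_zero_of_lt]

lemma zchoose_neg_one (i : ℕ) : zchoose (-1) i = (-1) ^ i := by
  simp [zchoose]

namespace VertexAlg

variable (A : VertexAlg V)

/-- The Borcherds identity at `p = 0`. -/
lemma commutator (u v w : V) (m q : ℤ) :
    A.mode u m (A.mode v q w) = A.mode v q (A.mode u m w)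
      + ∑ᶠ i : ℕ, zchoose m i • A.mode (A.mode u i v) (m + q - i) w := by
  have h := A.borcherds u v w 0 q m
  conv at h => rhs; rw [finsum_eq_single _ 0 fun i hi => by simp [zchoose_zero, hi]]
  simp only [zero_add, pow_zero, zchoose_zero, if_true, mul_one, Nat.cast_zero, sub_zero,
    add_zero, Int.negOnePow_zero, Units.val_one, one_smul] at h
  rw [h]
  abel

/-- The Borcherds identity at `m = 0, p = -1`. -/
lemma mode_mode_neg_one (u v w : V) (q : ℤ) :
    A.mode (A.mode u (-1) v) q w = ∑ᶠ i : ℕ,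
      (A.mode u (-1 - i) (A.mode v (q + i) w) + A.mode v (-1 + q - i) (A.mode u i w)) := by
  have h := A.borcherds u v w (-1) q 0
  conv at h => lhs; rw [finsum_eq_single _ 0 fun i hi => by simp [zchoose_zero, hi]]
  simpa [zchoose_zero, zchoose_neg_one, ← mul_pow] using h

end VertexAlg

namespace VOA

variable (W : VOA V)

lemma grading_eq_eigenspace (n : ℤ) :
    W.grading n = (W.mode W.ω 1).eigenspace (n : ℂ) := by
  have hle : W.grading ≤ fun k : ℤ => (W.mode W.ω 1).eigenspace (k : ℂ) :=
    fun k v hv => Module.End.mem_eigenspace_iff.mpr (W.L0_eigen k v hv)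
  exact congrFun ((((W.mode W.ω 1).eigenspaces_iSupIndep.comp Int.cast_injective
    ).le_iff_eq_of_iSup_eq_top W.internal.submodule_iSup_eq_top).mp hle) n

lemma eq_of_mem_grading {x : V} {i j : ℤ} (hi : x ∈ W.grading i) (hj : x ∈ W.grading j)
    (hx : x ≠ 0) : i = j := by
  by_contra hij
  exact hx (Submodule.disjoint_def.mp (W.internal.submodule_iSupIndep.pairwiseDisjoint hij) x hi hj)

lemma nonneg_of_mem_grading {x : V} {n : ℤ} (hx : x ∈ W.grading n) (h0 : x ≠ 0) : 0 ≤ n := by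
  by_contra hn
  rw [W.neg_bot n (not_le.mp hn)] at hx
  exact h0 ((Submodule.mem_bot ℂ).mp hx)

lemma mode_mem_grading_s8 {u w : V} {r s : ℤ} (hu : u ∈ W.grading r) (hw : w ∈ W.grading s)
    (m : ℤ) : W.mode u m w ∈ W.grading (s + r - m - 1) := by
  have hL0u := W.L0_eigen r u hu
  rw [grading_eq_eigenspace, Module.End.mem_eigenspace_iff] at hw ⊢
  have hsupp : (Function.support fun i : ℕ =>
      zchoose 1 i • W.mode (W.mode W.ω i u) (1 + m - i) w) ⊆ ({0, 1} : Finset ℕ) := by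
    intro i hi
    by_contra h
    simp only [Finset.coe_insert, Finset.coe_singleton, Set.mem_insert_iff,
      Set.mem_singleton_iff, not_or] at h
    exact hi (by simp [zchoose_one, show ¬ i ≤ 1 by omega])
  rw [W.commutator, finsum_eq_sum_of_support_subset _ hsupp, Finset.sum_pair zero_ne_one, hw]
  have hL1u : W.mode (W.mode W.ω 0 u) (1 + m) w = (-(1 + m)) • W.mode u m w := by
    rw [W.Lneg1_deriv, add_sub_cancel_left]
    rfl
  simp only [zchoose_one, Nat.cast_zero, Nat.cast_one, sub_zero, add_sub_cancel_left, zero_le,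
    le_refl, if_true, one_smul, hL1u, hL0u, map_smul, Pi.smul_apply, LinearMap.smul_apply]
  module

end VOA

def inversions {α : Type*} [LinearOrder α] : List α → ℕ
  | [] => 0
  | a :: l => l.countP (· < a) + inversions l

lemma inversions_swap_lt {α : Type*} [LinearOrder α] {a b : α} (hab : b < a) (p l : List α) :
    inversions (p ++ b :: a :: l) < inversions (p ++ a :: b :: l) := by
  induction p with
  | nil =>
    simp only [List.nil_append, inversions, not_lt.mpr hab.le, decide_false, Bool.false_eq_true,
      not_false_eq_true, List.countP_cons_of_neg, hab, decide_true, List.countP_cons_of_pos]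
    omega
  | cons c p ih =>
    simp only [List.cons_append, inversions, List.countP_append, List.countP_cons]
    omega

structure HomMode (W : VOA V) where
  state : V
  index : ℤ
  weight : ℕ
  mem_grading : state ∈ W.grading weight

namespace HomMode

variable {W : VOA V}

def op (m : HomMode W) : Module.End ℂ V := W.mode m.state m.index

def toPair (m : HomMode W) : V × ℤ := (m.state, m.index)

def monomial (L : List (HomMode W)) : V := (L.map op).prod W.vac

@[simp]
lemma monomial_nil : monomial ([] : List (HomMode W)) = W.vac := rfl

@[simp]
lemma monomial_cons (m : HomMode W) (L : List (HomMode W)) :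
    monomial (m :: L) = W.mode m.state m.index (monomial L) := rfl

lemma monomial_append (p L : List (HomMode W)) :
    monomial (p ++ L) = (p.map op).prod (monomial L) := by
  simp [monomial, List.prod_append, Module.End.mul_apply]

lemma monomial_eq_applyModes (L : List (HomMode W)) :
    monomial L = applyModes V W.toVertexAlg (L.map toPair) W.vac := by
  induction L with
  | nil => rfl
  | cons m L ih => simp [ih, applyModes, toPair]

def totalWeight (L : List (HomMode W)) : ℕ := (L.map weight).sum

def sqWeight (L : List (HomMode W)) : ℕ := (L.map fun m => m.weight ^ 2).sum

@[simp]
lemma totalWeight_cons (m : HomMode W) (L : List (HomMode W)) :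
    totalWeight (m :: L) = m.weight + totalWeight L := List.sum_cons

@[simp]
lemma totalWeight_append (p L : List (HomMode W)) :
    totalWeight (p ++ L) = totalWeight p + totalWeight L := by
  simp [totalWeight]

@[simp]
lemma sqWeight_cons (m : HomMode W) (L : List (HomMode W)) :
    sqWeight (m :: L) = m.weight ^ 2 + sqWeight L := List.sum_cons

@[simp]
lemma sqWeight_append (p L : List (HomMode W)) :
    sqWeight (p ++ L) = sqWeight p + sqWeight L := by
  simp [sqWeight]

open Classical in
noncomputable def countOutside (X : Set V) (L : List (HomMode W)) : ℕ :=
  L.countP fun m => m.state ∉ X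

noncomputable def rank (X : Set V) (L : List (HomMode W)) : ℕ ×ₗ ℕ ×ₗ ℕ ×ₗ ℕ :=
  toLex (totalWeight L, toLex (sqWeight L, toLex (countOutside X L, inversions (L.map index))))

variable {X : Set V} {L L' : List (HomMode W)}

lemma rank_lt_of_totalWeight_lt (h : totalWeight L < totalWeight L') : rank X L < rank X L' :=
  Prod.Lex.toLex_lt_toLex.mpr (Or.inl h)

lemma rank_lt_of_sqWeight_lt (h₁ : totalWeight L = totalWeight L') (h : sqWeight L < sqWeight L') :
    rank X L < rank X L' :=
  Prod.Lex.toLex_lt_toLex.mpr (Or.inr ⟨h₁, Prod.Lex.toLex_lt_toLex.mpr (Or.inl h)⟩)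

lemma rank_lt_of_countOutside_lt (h₁ : totalWeight L = totalWeight L')
    (h₂ : sqWeight L = sqWeight L') (h : countOutside X L < countOutside X L') :
    rank X L < rank X L' :=
  Prod.Lex.toLex_lt_toLex.mpr (Or.inr ⟨h₁, Prod.Lex.toLex_lt_toLex.mpr
    (Or.inr ⟨h₂, Prod.Lex.toLex_lt_toLex.mpr (Or.inl h)⟩)⟩)

lemma rank_lt_of_inversions_lt (h₁ : totalWeight L = totalWeight L')
    (h₂ : sqWeight L = sqWeight L') (h₃ : countOutside X L = countOutside X L')
    (h : inversions (L.map index) < inversions (L'.map index)) : rank X L < rank X L' :=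
  Prod.Lex.toLex_lt_toLex.mpr (Or.inr ⟨h₁, Prod.Lex.toLex_lt_toLex.mpr
    (Or.inr ⟨h₂, Prod.Lex.toLex_lt_toLex.mpr (Or.inr ⟨h₃, h⟩)⟩)⟩)

end HomMode

def orderedMonomials (W : VOA V) (X : Set V) : Set V :=
  { x | ∃ L : List (V × ℤ),
      (∀ p ∈ L, p.1 ∈ X) ∧
      L.IsChain (fun p q => p.2 ≤ q.2) ∧
      (∀ p ∈ L, p.2 < 0) ∧
      x = applyModes V W.toVertexAlg L W.vac }

def C1generators (W : VOA V) : Set V :=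
  { x | ∃ u v : V, (∃ r : ℤ, 0 < r ∧ u ∈ W.grading r) ∧
      (∃ r : ℤ, 0 < r ∧ v ∈ W.grading r) ∧ x = W.mode u (-1) v }
    ∪ { x | ∃ u : V, (∃ r : ℤ, 0 < r ∧ u ∈ W.grading r) ∧ x = W.mode W.ω 0 u }

lemma C1space_eq_span (W : VOA V) : C1space V W = Submodule.span ℂ (C1generators W) := rfl

lemma exists_mem_grading_of_mem_C1generators (W : VOA V) {g : V} (hg : g ∈ C1generators W) :
    ∃ j, g ∈ W.grading j := by
  rcases hg with ⟨u, v, ⟨_, _, hu⟩, ⟨_, _, hv⟩, rfl⟩ | ⟨u, ⟨_, _, hu⟩, rfl⟩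
  · exact ⟨_, W.mode_mem_grading_s8 hu hv (-1)⟩
  · exact ⟨_, W.mode_mem_grading_s8 W.ω_grade hu 0⟩

def VertexAlg.modeApply (A : VertexAlg V) (n : ℤ) (w : V) : V →ₗ[ℂ] V :=
  LinearMap.applyₗ w ∘ₗ LinearMap.proj n ∘ₗ A.mode

namespace HomMode

variable {W : VOA V} {X : Set V}

local notation "𝒰" => Submodule.span ℂ (orderedMonomials W X)

lemma monomial_mem_of_isChain {L : List (HomMode W)} (hX : ∀ m ∈ L, m.state ∈ X)
    (hL : L.IsChain fun a b => a.index ≤ b.index) : monomial L ∈ 𝒰 := by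
  rcases L.eq_nil_or_concat' with rfl | ⟨p, e, rfl⟩
  · exact Submodule.subset_span ⟨[], by simp, .nil, by simp, rfl⟩
  by_cases he : 0 ≤ e.index
  · simp [monomial_append, W.creation_nonneg _ _ he]
  have hneg : ∀ m ∈ p ++ [e], m.index < 0 := by
    intro m hm
    rcases List.mem_append.mp hm with hm | hm
    · have := (List.pairwise_append.mp (List.isChain_iff_pairwise.mp hL)).2.2 m hm e (by simp)
      omega
    · rw [List.mem_singleton.mp hm]
      omega
  refine Submodule.subset_span ⟨(p ++ [e]).map toPair, ?_, ?_, ?_, monomial_eq_applyModes _⟩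
  · exact List.forall_mem_map.mpr hX
  · exact (List.isChain_map _).mpr hL
  · exact List.forall_mem_map.mpr hneg

lemma monomial_mem_of_inversion {p t : List (HomMode W)} {a b : HomMode W}
    (hab : b.index < a.index)
    (ih : ∀ L : List (HomMode W), rank X L < rank X (p ++ a :: b :: t) → monomial L ∈ 𝒰) :
    monomial (p ++ a :: b :: t) ∈ 𝒰 := by
  have hswap : monomial (p ++ b :: a :: t) ∈ 𝒰 := by
    refine ih _ (rank_lt_of_inversions_lt ?_ ?_ ?_ ?_)
    · simp only [totalWeight_append, totalWeight_cons]
      omega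
    · simp only [sqWeight_append, sqWeight_cons]
      omega
    · simp only [countOutside, List.countP_append, List.countP_cons]
      omega
    · simpa using inversions_swap_lt hab (p.map index) (t.map index)
  have hbracket : ∀ i : ℕ, W.mode (W.mode a.state i b.state) (a.index + b.index - i)
      (monomial t) ∈ Submodule.comap (p.map op).prod 𝒰 := by
    intro i
    by_cases h0 : W.mode a.state i b.state = 0
    · simp [h0]
    have hmem := W.mode_mem_grading_s8 a.mem_grading b.mem_grading i
    obtain ⟨k, hk⟩ := Int.eq_ofNat_of_zero_le (W.nonneg_of_mem_grading hmem h0)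
    rw [hk] at hmem
    have := ih (p ++ ⟨_, a.index + b.index - i, k, hmem⟩ :: t) (rank_lt_of_totalWeight_lt ?_)
    · simpa [monomial_append] using this
    · simp only [totalWeight_append, totalWeight_cons]
      omega
  rw [monomial_append, monomial_cons, monomial_cons, W.commutator, map_add]
  refine add_mem (by simpa [monomial_append] using hswap) ?_
  exact finsum_induction (· ∈ Submodule.comap (p.map op).prod 𝒰) (zero_mem _) (fun _ _ => add_mem)
    fun i => Submodule.smul_of_tower_mem _ _ (hbracket i)

section Replacement

variable {p t : List (HomMode W)} {e : HomMode W}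

lemma prod_mode_mem_of_mem_X
    (ih : ∀ L : List (HomMode W), rank X L < rank X (p ++ e :: t) → monomial L ∈ 𝒰)
    {g : V} (he : e.state ∉ X) (hgX : g ∈ X) (hg : g ∈ W.grading e.weight) :
    (p.map op).prod (W.mode g e.index (monomial t)) ∈ 𝒰 := by
  have := ih (p ++ ⟨g, e.index, e.weight, hg⟩ :: t) (rank_lt_of_countOutside_lt ?_ ?_ ?_)
  · simpa [monomial_append] using this
  · simp
  · simp
  · simp [countOutside, hgX, he]

lemma prod_mode_mode_neg_one_mem
    (ih : ∀ L : List (HomMode W), rank X L < rank X (p ++ e :: t) → monomial L ∈ 𝒰)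
    {u v : V} {a b : ℕ} (ha : 0 < a) (hb : 0 < b) (hu : u ∈ W.grading a)
    (hv : v ∈ W.grading b) (hg : W.mode u (-1) v ∈ W.grading e.weight) :
    (p.map op).prod (W.mode (W.mode u (-1) v) e.index (monomial t)) ∈ 𝒰 := by
  by_cases h0 : W.mode u (-1) v = 0
  · simp [h0]
  have hw : b + a = e.weight := by
    have := W.eq_of_mem_grading (W.mode_mem_grading_s8 hu hv (-1)) hg h0
    omega
  have hsq : a ^ 2 + b ^ 2 < e.weight ^ 2 := by
    rw [← hw]
    nlinarith
  have hpair : ∀ x y : HomMode W, x.weight + y.weight = e.weight →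
      x.weight ^ 2 + y.weight ^ 2 < e.weight ^ 2 → monomial (p ++ x :: y :: t) ∈ 𝒰 := by
    intro x y hxy hsq
    refine ih _ (rank_lt_of_sqWeight_lt ?_ ?_)
    · simp only [totalWeight_append, totalWeight_cons]
      omega
    · simp only [sqWeight_append, sqWeight_cons]
      omega
  rw [W.mode_mode_neg_one]
  refine finsum_induction (· ∈ Submodule.comap (p.map op).prod 𝒰) (zero_mem _)
    (fun _ _ => add_mem) fun i => add_mem ?_ ?_
  · simpa [monomial_append] using
      hpair ⟨u, _, a, hu⟩ ⟨v, _, b, hv⟩ (by dsimp only; omega) (by dsimp only; linarith)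
  · simpa [monomial_append] using
      hpair ⟨v, _, b, hv⟩ ⟨u, _, a, hu⟩ (by dsimp only; omega) (by dsimp only; linarith)

lemma prod_mode_L_neg_one_mem
    (ih : ∀ L : List (HomMode W), rank X L < rank X (p ++ e :: t) → monomial L ∈ 𝒰)
    {u : V} {a : ℕ} (hu : u ∈ W.grading a) (hg : W.mode W.ω 0 u ∈ W.grading e.weight) :
    (p.map op).prod (W.mode (W.mode W.ω 0 u) e.index (monomial t)) ∈ 𝒰 := by
  by_cases h0 : W.mode W.ω 0 u = 0
  · simp [h0]
  have hw : a + 1 = e.weight := by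
    have := W.eq_of_mem_grading (W.mode_mem_grading_s8 W.ω_grade hu 0) hg h0
    omega
  rw [W.Lneg1_deriv, LinearMap.smul_apply, map_zsmul]
  refine zsmul_mem ?_ _
  have := ih (p ++ ⟨u, e.index - 1, a, hu⟩ :: t) (rank_lt_of_totalWeight_lt ?_)
  · simpa [monomial_append] using this
  · simp only [totalWeight_append, totalWeight_cons]
    omega

lemma monomial_mem_of_not_mem (hXhom : ∀ u ∈ X, ∃ j, u ∈ W.grading j)
    (hspan : Submodule.span ℂ X ⊔ C1space V W = ⊤)
    (ih : ∀ L : List (HomMode W), rank X L < rank X (p ++ e :: t) → monomial L ∈ 𝒰)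
    (he : e.state ∉ X) : monomial (p ++ e :: t) ∈ 𝒰 := by
  let Φ : V →ₗ[ℂ] V := (p.map op).prod ∘ₗ W.modeApply e.index (monomial t)
  have hgen : ∀ g ∈ X ∪ C1generators W, g ∈ W.grading e.weight → Φ g ∈ 𝒰 := by
    rintro g (hgX | ⟨u, v, ⟨a, ha, hu⟩, ⟨b, hb, hv⟩, rfl⟩ | ⟨u, ⟨a, ha, hu⟩, rfl⟩) hg
    · exact prod_mode_mem_of_mem_X ih he hgX hg
    · lift a to ℕ using ha.le
      lift b to ℕ using hb.le
      exact prod_mode_mode_neg_one_mem ih (by omega) (by omega) hu hv hg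
    · lift a to ℕ using ha.le
      exact prod_mode_L_neg_one_mem ih hu hg
  have hmem : e.state ∈ Submodule.span ℂ {g ∈ X ∪ C1generators W | g ∈ W.grading e.weight} := by
    refine W.internal.submodule_iSupIndep.mem_span_sep_of_mem_span ?_ e.mem_grading ?_
    · rintro g (hg | hg)
      exacts [hXhom g hg, exists_mem_grading_of_mem_C1generators W hg]
    · rw [Submodule.span_union, ← C1space_eq_span, hspan]
      trivial
  rw [monomial_append, monomial_cons]
  exact (Submodule.span_le (p := Submodule.comap Φ 𝒰)).mpr (fun g hg => hgen g hg.1 hg.2) hmem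

end Replacement

theorem monomial_mem_span (hXhom : ∀ u ∈ X, ∃ j, u ∈ W.grading j)
    (hspan : Submodule.span ℂ X ⊔ C1space V W = ⊤) (L : List (HomMode W)) :
    monomial L ∈ 𝒰 := by
  induction L using (InvImage.wf (rank X) wellFounded_lt).induction with
  | _ L ih =>
  by_cases hLX : ∀ m ∈ L, m.state ∈ X
  · by_cases hsorted : L.IsChain fun a b => a.index ≤ b.index
    · exact monomial_mem_of_isChain hLX hsorted
    · obtain ⟨a, b, p, t, rfl, hab⟩ : ∃ a b p t, L = p ++ a :: b :: t ∧ b.index < a.index := by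
        simpa [List.isChain_iff_forall_rel_of_append_cons_cons] using hsorted
      exact monomial_mem_of_inversion hab ih
  · push Not at hLX
    obtain ⟨e, he, heX⟩ := hLX
    obtain ⟨p, t, rfl⟩ := List.append_of_mem he
    exact monomial_mem_of_not_mem hXhom hspan ih heX

end HomMode

/-- Index-ordered Karel–Li spanning set: `n₁ ≤ ⋯ ≤ nᵣ < 0` (difference-zero condition). -/
theorem stmt8 (W : VOA V) (X : Set V) (wt : V → ℤ)
    (hhom : ∀ u ∈ X, u ∈ W.grading (wt u))
    (hspan : Submodule.span ℂ ((C1space V W).mkQ '' X) = ⊤) :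
    Submodule.span ℂ { x | ∃ L : List (V × ℤ),
      (∀ p ∈ L, p.1 ∈ X) ∧
      L.Chain' (fun p q => p.2 ≤ q.2) ∧
      (∀ p ∈ L, p.2 < 0) ∧
      x = applyModes V W.toVertexAlg L W.vac } = (⊤ : Submodule ℂ V) := by
  have hsup : Submodule.span ℂ X ⊔ C1space V W = ⊤ := by
    rw [sup_comm, ← Submodule.map_mkQ_eq_top, Submodule.map_span, hspan]
  change Submodule.span ℂ (orderedMonomials W X) = ⊤
  rw [eq_top_iff, ← W.internal.submodule_iSup_eq_top]
  refine iSup_le fun j v hv => ?_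
  obtain hj | hj := lt_or_ge j 0
  · rw [W.neg_bot j hj, Submodule.mem_bot] at hv
    rw [hv]
    exact zero_mem _
  lift j to ℕ using hj
  simpa [W.creation_neg_one] using
    HomMode.monomial_mem_span (fun u hu => ⟨wt u, hhom u hu⟩) hsup [⟨v, -1, j, hv⟩]

end VOAPaper
end
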